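/- For every k ≥ 2 there exists n with PPL_t(n) = PPL_t(n+1) = k, so SP2_t(k) is well-defined; moreover SP2_t(k) = 4·SP_t(k−1) − 2 for all k ≥ 2, and SP_t(k−1) ≤ SP2_t(k−1) < SP_t(k) for all k ≥ 3. -/

import Mathlib

/-- The Thue–Morse word: `tm n` is the number of ones (sum of binary digits)
in the binary expansion of `n`, taken mod 2. -/
def tm (n : ℕ) : ℕ := (Nat.digits 2 n).sum % 2

/-- `ps` is a factorization of the finite word `w` into nonempty palindromes. -/
def IsPalDecomp (w : List ℕ) (ps : List (List ℕ)) : Prop :=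
  ps.flatten = w ∧ ∀ p ∈ ps, p ≠ [] ∧ p.Palindrome

/-- The palindromic length of a finite word: the least number of nonempty
palindromes whose concatenation is the word (0 for the empty word). -/
noncomputable def palLen (w : List ℕ) : ℕ :=
  sInf {k | ∃ ps, ps.length = k ∧ IsPalDecomp w ps}

/-- `pplTM n` is the palindromic length of the prefix of length `n`
of the Thue–Morse word. -/
noncomputable def pplTM (n : ℕ) : ℕ := palLen ((List.range n).map tm)

/-- `spTM k` is the length of the shortest prefix of the Thue–Morse word of
palindromic length `k`. -/
noncomputable def spTM (k : ℕ) : ℕ := sInf {n | pplTM n = k}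

/-- `sp2TM k` is the least `n` with `PPL_t(n) = PPL_t(n+1) = k`. -/
noncomputable def sp2TM (k : ℕ) : ℕ := sInf {n | pplTM n = k ∧ pplTM (n + 1) = k}


/-!
`PPL_t` satisfies the recurrence `pplRec`: `PPL_t(4m) = PPL_t(m)`, `PPL_t(4m+1) = PPL_t(m) + 1`,
`PPL_t(4m+2) = min(PPL_t(m), PPL_t(m+1)) + 2`, `PPL_t(4m+3) = min(PPL_t(m) + 2, PPL_t(m+1) + 1)`.
The upper bounds come from pushing an optimal factorisation of `t[0,m)` (or the last palindrome of
one of `t[0,m+1)`) through the morphism `0 ↦ 0110, 1 ↦ 1001`, which preserves palindromes.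
The lower bound reduces to `pplRec n ≤ pplRec c + 1` whenever `t[c,n)` is a palindrome: odd
palindromes of `t` have length 1 or 3, an even one is centred at an even position and
desubstitutes to an antipalindrome of half the length, and that one is either short (odd centre)
or desubstitutes once more to a palindrome, on which we induct.
From the recurrence, if `s = SP_t(k)` then `PPL_t(s-1) = k-1`, so `4s-2` and `4s-1` both have
length `k+1`, and a case analysis modulo 4 shows nothing smaller does; every `n ≤ 4s-2` has
`PPL_t(n) ≤ PPL_t(⌊n/4⌋) + 2 ≤ k+1`, whence `SP2_t(k+1) < SP_t(k+2)`.
-/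

lemma tm_le_one (n : ℕ) : tm n ≤ 1 := Nat.lt_succ_iff.mp (Nat.mod_lt _ two_pos)

lemma tm_two_mul (n : ℕ) : tm (2 * n) = tm n := by
  rcases Nat.eq_zero_or_pos n with rfl | hn
  · rfl
  · rw [tm, Nat.digits_def' one_lt_two (by omega), Nat.mul_mod_right,
      Nat.mul_div_cancel_left n two_pos, List.sum_cons, zero_add, tm]

lemma tm_two_mul_add_one (n : ℕ) : tm (2 * n + 1) = 1 - tm n := by
  unfold tm
  rw [Nat.digits_def' one_lt_two (by omega), show (2 * n + 1) / 2 = n by omega,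
    show (2 * n + 1) % 2 = 1 by omega, List.sum_cons]
  omega

lemma tm_four_mul (n : ℕ) : tm (4 * n) = tm n := by
  rw [show 4 * n = 2 * (2 * n) by ring, tm_two_mul, tm_two_mul]

lemma tm_four_mul_add_one (n : ℕ) : tm (4 * n + 1) = 1 - tm n := by
  rw [show 4 * n + 1 = 2 * (2 * n) + 1 by ring, tm_two_mul_add_one, tm_two_mul]

lemma tm_four_mul_add_two (n : ℕ) : tm (4 * n + 2) = 1 - tm n := by
  rw [show 4 * n + 2 = 2 * (2 * n + 1) by ring, tm_two_mul, tm_two_mul_add_one]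

lemma tm_four_mul_add_three (n : ℕ) : tm (4 * n + 3) = tm n := by
  have := tm_le_one n
  rw [show 4 * n + 3 = 2 * (2 * n + 1) + 1 by ring, tm_two_mul_add_one, tm_two_mul_add_one]
  omega

lemma odd_of_tm_eq_tm_succ {n : ℕ} (h : tm n = tm (n + 1)) : Odd n := by
  obtain ⟨m, rfl | rfl⟩ : ∃ m, n = 2 * m ∨ n = 2 * m + 1 := ⟨n / 2, by omega⟩
  · have := tm_le_one m
    rw [tm_two_mul, tm_two_mul_add_one] at h
    omega
  · exact odd_two_mul_add_one m

lemma tm_not_pal_five (n : ℕ) (h₁ : tm (n + 1) = tm (n + 3)) (h₀ : tm n = tm (n + 4)) :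
    False := by
  obtain ⟨m, rfl | rfl⟩ : ∃ m, n = 2 * m ∨ n = 2 * m + 1 := ⟨n / 2, by omega⟩
  · rw [show 2 * m + 3 = 2 * (m + 1) + 1 by ring, tm_two_mul_add_one, tm_two_mul_add_one] at h₁
    rw [show 2 * m + 4 = 2 * (m + 1 + 1) by ring, tm_two_mul, tm_two_mul] at h₀
    have := tm_le_one m
    have := tm_le_one (m + 1)
    have := Nat.odd_iff.mp (odd_of_tm_eq_tm_succ (n := m) (by omega))
    have := Nat.odd_iff.mp (odd_of_tm_eq_tm_succ (n := m + 1) (by omega))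
    omega
  · rw [show 2 * m + 1 + 1 = 2 * (m + 1) by ring, show 2 * m + 1 + 3 = 2 * (m + 1 + 1) by ring,
      tm_two_mul, tm_two_mul] at h₁
    rw [show 2 * m + 1 + 4 = 2 * (m + 1 + 1) + 1 by ring, tm_two_mul_add_one,
      tm_two_mul_add_one] at h₀
    have := tm_le_one m
    have := tm_le_one (m + 1 + 1)
    have := Nat.odd_iff.mp (odd_of_tm_eq_tm_succ (n := m) (by omega))
    have := Nat.odd_iff.mp (odd_of_tm_eq_tm_succ (n := m + 1) h₁)
    omega

def pplRec : ℕ → ℕ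
  | 0 => 0
  | n + 1 =>
    if (n + 1) % 4 = 0 then pplRec ((n + 1) / 4)
    else if (n + 1) % 4 = 1 then pplRec ((n + 1) / 4) + 1
    else if (n + 1) % 4 = 2 then min (pplRec ((n + 1) / 4)) (pplRec ((n + 1) / 4 + 1)) + 2
    else min (pplRec ((n + 1) / 4) + 2) (pplRec ((n + 1) / 4 + 1) + 1)
decreasing_by all_goals omega

lemma pplRec_zero : pplRec 0 = 0 := by simp [pplRec]

lemma pplRec_four_mul (m : ℕ) : pplRec (4 * m) = pplRec m := by
  cases m with
  | zero => rfl
  | succ m =>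
    rw [show 4 * (m + 1) = (4 * m + 3) + 1 by ring, pplRec]
    simp [show (4 * m + 3 + 1) % 4 = 0 by omega, show (4 * m + 3 + 1) / 4 = m + 1 by omega]

lemma pplRec_four_mul_add_one (m : ℕ) : pplRec (4 * m + 1) = pplRec m + 1 := by
  rw [pplRec]
  simp [show (4 * m + 1) % 4 = 1 by omega, show (4 * m + 1) / 4 = m by omega]

lemma pplRec_four_mul_add_two (m : ℕ) :
    pplRec (4 * m + 2) = min (pplRec m) (pplRec (m + 1)) + 2 := by
  rw [pplRec]
  simp [show (4 * m + 1 + 1) % 4 = 2 by omega, show (4 * m + 1 + 1) / 4 = m by omega]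

lemma pplRec_four_mul_add_three (m : ℕ) :
    pplRec (4 * m + 3) = min (pplRec m + 2) (pplRec (m + 1) + 1) := by
  rw [pplRec]
  simp [show (4 * m + 2 + 1) % 4 = 3 by omega, show (4 * m + 2 + 1) / 4 = m by omega]

lemma pplRec_le_div_four_add_two (n : ℕ) : pplRec n ≤ pplRec (n / 4) + 2 := by
  obtain ⟨m, r, hr, rfl⟩ : ∃ m r, r < 4 ∧ n = 4 * m + r := ⟨n / 4, n % 4, by omega, by omega⟩
  rw [show (4 * m + r) / 4 = m by omega]
  interval_cases r
  · rw [Nat.add_zero, pplRec_four_mul]; omega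
  · rw [pplRec_four_mul_add_one]; omega
  · rw [pplRec_four_mul_add_two]; omega
  · rw [pplRec_four_mul_add_three]; omega

lemma pplRec_succ_le_and_le_succ (n : ℕ) :
    pplRec (n + 1) ≤ pplRec n + 1 ∧ pplRec n ≤ pplRec (n + 1) + 1 := by
  induction n using Nat.strong_induction_on with
  | _ n ih =>
    obtain ⟨m, r, hr, rfl⟩ : ∃ m r, r < 4 ∧ n = 4 * m + r := ⟨n / 4, n % 4, by omega, by omega⟩
    have hm : pplRec (m + 1) ≤ pplRec m + 1 ∧ pplRec m ≤ pplRec (m + 1) + 1 := by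
      rcases Nat.eq_zero_or_pos m with rfl | hm
      · have h₁ : pplRec 1 = 1 := by simpa [pplRec_zero] using pplRec_four_mul_add_one 0
        simp [h₁, pplRec_zero]
      · exact ih m (by omega)
    interval_cases r
    · simp only [Nat.add_zero]
      rw [pplRec_four_mul_add_one, pplRec_four_mul]; omega
    · rw [pplRec_four_mul_add_two, pplRec_four_mul_add_one]; omega
    · rw [pplRec_four_mul_add_three, pplRec_four_mul_add_two]; omega
    · rw [show 4 * m + 3 + 1 = 4 * (m + 1) by ring, pplRec_four_mul, pplRec_four_mul_add_three]
      omega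

lemma pplRec_succ_le (n : ℕ) : pplRec (n + 1) ≤ pplRec n + 1 :=
  (pplRec_succ_le_and_le_succ n).1

def IsTMPal (c n : ℕ) : Prop := ∀ i, c ≤ i → i < n → tm i = tm (c + n - 1 - i)

def IsTMAntipal (c n : ℕ) : Prop := ∀ i, c ≤ i → i < n → tm i + tm (c + n - 1 - i) = 1

lemma isTMPal_of_upper_half {c n : ℕ}
    (h : ∀ i, c + n ≤ 2 * i + 1 → i < n → tm i = tm (c + n - 1 - i)) : IsTMPal c n := by
  intro i hci hin
  by_cases hi : c + n ≤ 2 * i + 1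
  · exact h i hi hin
  · rw [h (c + n - 1 - i) (by omega) (by omega), show c + n - 1 - (c + n - 1 - i) = i by omega]

lemma isTMAntipal_of_upper_half {c n : ℕ}
    (h : ∀ i, c + n ≤ 2 * i + 1 → i < n → tm i + tm (c + n - 1 - i) = 1) :
    IsTMAntipal c n := by
  intro i hci hin
  by_cases hi : c + n ≤ 2 * i + 1
  · exact h i hi hin
  · have := h (c + n - 1 - i) (by omega) (by omega)
    rw [show c + n - 1 - (c + n - 1 - i) = i by omega] at this
    omega

lemma IsTMPal.shrink {c n : ℕ} (hP : IsTMPal c n) (k : ℕ) : IsTMPal (c + k) (n - k) := by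
  intro i hci hin
  rw [hP i (by omega) (by omega)]
  congr 1
  omega

lemma IsTMPal.shrink_radius {y h h' : ℕ} (hP : IsTMPal (y - h) (y + h)) (hh' : h' ≤ h)
    (hy : h ≤ y) : IsTMPal (y - h') (y + h') := by
  simpa [show y - h + (h - h') = y - h' by omega, show y + h - (h - h') = y + h' by omega]
    using hP.shrink (h - h')

lemma IsTMPal.four_mul {c n : ℕ} (hP : IsTMPal c n) : IsTMPal (4 * c) (4 * n) := by
  intro j hcj hjn
  obtain ⟨i, r, hr, rfl⟩ : ∃ i r, r < 4 ∧ j = 4 * i + r := ⟨j / 4, j % 4, by omega, by omega⟩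
  have hi := hP i (by omega) (by omega)
  interval_cases r
  · rw [show 4 * c + 4 * n - 1 - (4 * i + 0) = 4 * (c + n - 1 - i) + 3 by omega, Nat.add_zero,
      tm_four_mul, tm_four_mul_add_three, hi]
  · rw [show 4 * c + 4 * n - 1 - (4 * i + 1) = 4 * (c + n - 1 - i) + 2 by omega,
      tm_four_mul_add_one, tm_four_mul_add_two, hi]
  · rw [show 4 * c + 4 * n - 1 - (4 * i + 2) = 4 * (c + n - 1 - i) + 1 by omega,
      tm_four_mul_add_two, tm_four_mul_add_one, hi]
  · rw [show 4 * c + 4 * n - 1 - (4 * i + 3) = 4 * (c + n - 1 - i) by omega,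
      tm_four_mul_add_three, tm_four_mul, hi]

lemma IsTMPal.center_even {y h : ℕ} (hP : IsTMPal (y - h) (y + h)) (hh : 1 ≤ h) (hy : h ≤ y) :
    Even y := by
  have := hP y (by omega) (by omega)
  rw [show y - h + (y + h) - 1 - y = y - 1 by omega] at this
  have := Nat.odd_iff.mp <|
    odd_of_tm_eq_tm_succ (n := y - 1) (by rw [Nat.sub_add_cancel (by omega)]; exact this.symm)
  exact Nat.even_iff.mpr (by omega)

lemma IsTMPal.antipal_half {z h : ℕ} (hP : IsTMPal (2 * z - h) (2 * z + h)) (hz : h ≤ 2 * z) :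
    IsTMAntipal (z - (h + 1) / 2) (z + (h + 1) / 2) := by
  apply isTMAntipal_of_upper_half
  intro i hi hin
  have := hP (2 * i) (by omega) (by omega)
  rw [show 2 * z - h + (2 * z + h) - 1 - 2 * i = 2 * (2 * z - 1 - i) + 1 by omega, tm_two_mul,
    tm_two_mul_add_one] at this
  rw [show z - (h + 1) / 2 + (z + (h + 1) / 2) - 1 - i = 2 * z - 1 - i by omega]
  have := tm_le_one (2 * z - 1 - i)
  omega

lemma IsTMAntipal.pal_half {z g : ℕ} (hA : IsTMAntipal (2 * z - g) (2 * z + g)) (hz : g ≤ 2 * z) :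
    IsTMPal (z - (g + 1) / 2) (z + (g + 1) / 2) := by
  apply isTMPal_of_upper_half
  intro i hi hin
  have := hA (2 * i) (by omega) (by omega)
  rw [show 2 * z - g + (2 * z + g) - 1 - 2 * i = 2 * (2 * z - 1 - i) + 1 by omega, tm_two_mul,
    tm_two_mul_add_one] at this
  rw [show z - (g + 1) / 2 + (z + (g + 1) / 2) - 1 - i = 2 * z - 1 - i by omega]
  have := tm_le_one (2 * z - 1 - i)
  omega

lemma IsTMAntipal.tm_sub_eq_tm_add {z g d : ℕ} (hA : IsTMAntipal (2 * z + 1 - g) (2 * z + 1 + g))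
    (hg : g ≤ 2 * z + 1) (hd : 1 ≤ d) (hdz : d ≤ z) (hdg : 2 * d ≤ g) :
    tm (z - d) = tm (z + d) := by
  have := hA (2 * (z + d)) (by omega) (by omega)
  rw [show 2 * z + 1 - g + (2 * z + 1 + g) - 1 - 2 * (z + d) = 2 * (z - d) + 1 by omega,
    tm_two_mul, tm_two_mul_add_one] at this
  have := tm_le_one (z - d)
  omega

lemma IsTMAntipal.radius_le_three {z g : ℕ} (hA : IsTMAntipal (2 * z + 1 - g) (2 * z + 1 + g))
    (hg : g ≤ 2 * z + 1) : g ≤ 3 := by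
  by_contra! hg3
  have h₁ := hA.tm_sub_eq_tm_add hg (d := 1) le_rfl (by omega) (by omega)
  have h₂ := hA.tm_sub_eq_tm_add hg (d := 2) (by omega) (by omega) (by omega)
  apply tm_not_pal_five (z - 2)
  · rwa [show z - 2 + 1 = z - 1 by omega, show z - 2 + 3 = z + 1 by omega]
  · rwa [show z - 2 + 4 = z + 2 by omega]

lemma pplRec_add_three_le {n : ℕ} (h : tm n = tm (n + 2)) : pplRec (n + 3) ≤ pplRec n + 1 := by
  obtain ⟨m, rfl | rfl⟩ : ∃ m, n = 2 * m ∨ n = 2 * m + 1 := ⟨n / 2, by omega⟩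
  · rw [show 2 * m + 2 = 2 * (m + 1) by ring, tm_two_mul, tm_two_mul] at h
    obtain ⟨v, rfl⟩ := odd_of_tm_eq_tm_succ h
    rw [show 2 * (2 * v + 1) + 3 = 4 * (v + 1) + 1 by ring,
      show 2 * (2 * v + 1) = 4 * v + 2 by ring, pplRec_four_mul_add_one, pplRec_four_mul_add_two]
    have := pplRec_succ_le v
    omega
  · rw [show 2 * m + 1 + 2 = 2 * (m + 1) + 1 by ring, tm_two_mul_add_one, tm_two_mul_add_one] at h
    have := tm_le_one m
    have := tm_le_one (m + 1)
    obtain ⟨v, rfl⟩ := odd_of_tm_eq_tm_succ (n := m) (by omega)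
    rw [show 2 * (2 * v + 1) + 1 + 3 = 4 * (v + 1) + 2 by ring,
      show 2 * (2 * v + 1) + 1 = 4 * v + 3 by ring, pplRec_four_mul_add_two,
      pplRec_four_mul_add_three]
    have := pplRec_succ_le v
    omega

lemma pplRec_antipal_bound_of_odd_center {z g : ℕ}
    (hA : IsTMAntipal (2 * z + 1 - g) (2 * z + 1 + g)) (hg₀ : 1 ≤ g) (hg : g ≤ 2 * z + 1) :
    pplRec (2 * (2 * z + 1 + g)) ≤ pplRec (2 * (2 * z + 1 - g)) + 1 ∧
      pplRec (2 * (2 * z + 1 + g) - 1) ≤ pplRec (2 * (2 * z + 1 - g) + 1) + 1 := by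
  have hL := pplRec_succ_le z
  obtain rfl | hg₂ := hg₀.eq_or_lt
  · rw [show 2 * (2 * z + 1 + 1) - 1 = 4 * z + 3 by omega,
      show 2 * (2 * z + 1 - 1) + 1 = 4 * z + 1 by omega,
      show 2 * (2 * z + 1 + 1) = 4 * (z + 1) by omega, show 2 * (2 * z + 1 - 1) = 4 * z by omega,
      pplRec_four_mul, pplRec_four_mul, pplRec_four_mul_add_three, pplRec_four_mul_add_one]
    omega
  obtain ⟨w, rfl⟩ : ∃ w, z = w + 1 := ⟨z - 1, by omega⟩
  have h3 : pplRec (w + 1 + 2) ≤ pplRec w + 1 :=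
    pplRec_add_three_le (hA.tm_sub_eq_tm_add hg le_rfl (by omega) hg₂)
  have hL' := pplRec_succ_le w
  obtain rfl | rfl : g = 2 ∨ g = 3 := by have := hA.radius_le_three hg; omega
  · rw [show 2 * (2 * (w + 1) + 1 + 2) - 1 = 4 * (w + 1 + 1) + 1 by omega,
      show 2 * (2 * (w + 1) + 1 - 2) + 1 = 4 * w + 3 by omega,
      show 2 * (2 * (w + 1) + 1 + 2) = 4 * (w + 1 + 1) + 2 by omega,
      show 2 * (2 * (w + 1) + 1 - 2) = 4 * w + 2 by omega, pplRec_four_mul_add_two,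
      pplRec_four_mul_add_two, pplRec_four_mul_add_one, pplRec_four_mul_add_three]
    simp only [Nat.add_assoc, Nat.reduceAdd] at h3 hL ⊢
    omega
  · rw [show 2 * (2 * (w + 1) + 1 + 3) - 1 = 4 * (w + 1 + 1) + 3 by omega,
      show 2 * (2 * (w + 1) + 1 - 3) + 1 = 4 * w + 1 by omega,
      show 2 * (2 * (w + 1) + 1 + 3) = 4 * (w + 1 + 2) by omega,
      show 2 * (2 * (w + 1) + 1 - 3) = 4 * w by omega, pplRec_four_mul, pplRec_four_mul,
      pplRec_four_mul_add_three, pplRec_four_mul_add_one]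
    simp only [Nat.add_assoc, Nat.reduceAdd] at h3 hL ⊢
    omega

lemma pplRec_antipal_bound_of_even_center {z g : ℕ} (hg₀ : 1 ≤ g) (hg : g ≤ 2 * z)
    (hpal : ∀ h, 1 ≤ h → h ≤ (g + 1) / 2 → pplRec (z + h) ≤ pplRec (z - h) + 1) :
    pplRec (2 * (2 * z + g)) ≤ pplRec (2 * (2 * z - g)) + 1 ∧
      pplRec (2 * (2 * z + g) - 1) ≤ pplRec (2 * (2 * z - g) + 1) + 1 := by
  obtain ⟨G, rfl | rfl⟩ : ∃ G, g = 2 * G ∨ g = 2 * G + 1 := ⟨g / 2, by omega⟩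
  · have h₁ := hpal G (by omega) (by omega)
    rw [show 2 * (2 * z + 2 * G) - 1 = 4 * (z + G - 1) + 3 by omega,
      show 2 * (2 * z - 2 * G) + 1 = 4 * (z - G) + 1 by omega,
      show 2 * (2 * z + 2 * G) = 4 * (z + G) by omega,
      show 2 * (2 * z - 2 * G) = 4 * (z - G) by omega, pplRec_four_mul, pplRec_four_mul,
      pplRec_four_mul_add_three, pplRec_four_mul_add_one, show z + G - 1 + 1 = z + G by omega]
    omega
  · have h₁ := hpal (G + 1) (by omega) (by omega)
    have h₀ : pplRec (z + G) ≤ pplRec (z - G) + 1 := by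
      rcases Nat.eq_zero_or_pos G with rfl | hG
      · exact Nat.le_succ _
      · exact hpal G hG (by omega)
    have hL := pplRec_succ_le (z - G - 1)
    rw [show z + (G + 1) = z + G + 1 by omega, show z - (G + 1) = z - G - 1 by omega] at h₁
    rw [show z - G - 1 + 1 = z - G by omega] at hL
    rw [show 2 * (2 * z + (2 * G + 1)) - 1 = 4 * (z + G) + 1 by omega,
      show 2 * (2 * z - (2 * G + 1)) + 1 = 4 * (z - G - 1) + 3 by omega,
      show 2 * (2 * z + (2 * G + 1)) = 4 * (z + G) + 2 by omega,
      show 2 * (2 * z - (2 * G + 1)) = 4 * (z - G - 1) + 2 by omega, pplRec_four_mul_add_one,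
      pplRec_four_mul_add_three, pplRec_four_mul_add_two, pplRec_four_mul_add_two,
      show z - G - 1 + 1 = z - G by omega]
    omega

theorem pplRec_le_of_isTMPal_even {y h : ℕ} (hP : IsTMPal (y - h) (y + h)) (hh : 1 ≤ h)
    (hy : h ≤ y) : pplRec (y + h) ≤ pplRec (y - h) + 1 := by
  obtain ⟨N, hN⟩ : ∃ N, y + h = N := ⟨_, rfl⟩
  induction N using Nat.strong_induction_on generalizing y h with
  | _ N ih =>
  obtain ⟨z, rfl⟩ : ∃ z, y = 2 * z := (hP.center_even hh hy).two_dvd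
  have hA := hP.antipal_half hy
  have hbound : pplRec (2 * (z + (h + 1) / 2)) ≤ pplRec (2 * (z - (h + 1) / 2)) + 1 ∧
      pplRec (2 * (z + (h + 1) / 2) - 1) ≤ pplRec (2 * (z - (h + 1) / 2) + 1) + 1 := by
    obtain ⟨w, rfl | rfl⟩ : ∃ w, z = 2 * w ∨ z = 2 * w + 1 := ⟨z / 2, by omega⟩
    · exact pplRec_antipal_bound_of_even_center (by omega) (by omega) fun h' hh' hh'g =>
        ih (w + h') (by omega) ((hA.pal_half (by omega)).shrink_radius hh'g (by omega)) hh'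
          (by omega) rfl
    · exact pplRec_antipal_bound_of_odd_center hA (by omega) (by omega)
  obtain ⟨G, rfl | rfl⟩ : ∃ G, h = 2 * G ∨ h = 2 * G + 1 := ⟨h / 2, by omega⟩
  · rw [show 2 * z + 2 * G = 2 * (z + (2 * G + 1) / 2) by omega,
      show 2 * z - 2 * G = 2 * (z - (2 * G + 1) / 2) by omega]
    exact hbound.1
  · rw [show 2 * z + (2 * G + 1) = 2 * (z + (2 * G + 1 + 1) / 2) - 1 by omega,
      show 2 * z - (2 * G + 1) = 2 * (z - (2 * G + 1 + 1) / 2) + 1 by omega]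
    exact hbound.2

theorem pplRec_le_of_isTMPal {c n : ℕ} (hP : IsTMPal c n) (hcn : c < n) :
    pplRec n ≤ pplRec c + 1 := by
  obtain ⟨r, rfl | rfl⟩ : ∃ r, n = c + 2 * r ∨ n = c + 2 * r + 1 := ⟨(n - c) / 2, by omega⟩
  · have hc : c + r - r = c := by omega
    have hn : c + r + r = c + 2 * r := by omega
    have := pplRec_le_of_isTMPal_even (y := c + r) (h := r) (by rwa [hc, hn]) (by omega) (by omega)
    rwa [hc, hn] at this
  · have hsym : ∀ d ≤ r, tm (c + r - d) = tm (c + r + d) := fun d hd => by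
      rw [hP (c + r - d) (by omega) (by omega)]
      congr 1
      omega
    rcases Nat.lt_or_ge r 2 with hr | hr
    · interval_cases r
      · exact pplRec_succ_le c
      · exact pplRec_add_three_le (hsym 1 le_rfl)
    · exfalso
      apply tm_not_pal_five (c + r - 2)
      · rw [show c + r - 2 + 1 = c + r - 1 by omega, show c + r - 2 + 3 = c + r + 1 by omega]
        exact hsym 1 (by omega)
      · rw [show c + r - 2 + 4 = c + r + 2 by omega]
        exact hsym 2 hr

lemma List.Palindrome.flatMap {α β : Type*} {l : List α} {σ : α → List β} (hl : l.Palindrome)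
    (hσ : ∀ a, (σ a).Palindrome) : (l.flatMap σ).Palindrome := by
  refine List.Palindrome.of_reverse_eq ?_
  rw [List.reverse_flatMap, hl.reverse_eq]
  exact congrArg l.flatMap (funext fun a => (hσ a).reverse_eq)

lemma IsPalDecomp.palLen_le {w : List ℕ} {ps : List (List ℕ)} (h : IsPalDecomp w ps) :
    palLen w ≤ ps.length :=
  Nat.sInf_le ⟨ps, rfl, h⟩

lemma exists_isPalDecomp_length_eq_palLen (w : List ℕ) :
    ∃ ps, IsPalDecomp w ps ∧ ps.length = palLen w := by
  have hne : {k | ∃ ps, ps.length = k ∧ IsPalDecomp w ps}.Nonempty :=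
    ⟨_, w.map ([·]), rfl, by simp [← List.flatMap_def], by simp [List.Palindrome.singleton]⟩
  obtain ⟨ps, hlen, hps⟩ := Nat.sInf_mem hne
  exact ⟨ps, hps, hlen⟩

lemma palLen_nil : palLen [] = 0 :=
  Nat.eq_zero_of_le_zero (IsPalDecomp.palLen_le (ps := []) ⟨rfl, by simp⟩)

lemma palLen_append_le {w p : List ℕ} (hp : p.Palindrome) (hne : p ≠ []) :
    palLen (w ++ p) ≤ palLen w + 1 := by
  obtain ⟨ps, ⟨hflat, hpal⟩, hlen⟩ := exists_isPalDecomp_length_eq_palLen w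
  have : IsPalDecomp (w ++ p) (ps ++ [p]) := by
    refine ⟨by simp [hflat], fun q hq => ?_⟩
    rcases List.mem_append.mp hq with hq | hq
    · exact hpal q hq
    · exact List.mem_singleton.mp hq ▸ ⟨hne, hp⟩
  simpa [hlen] using this.palLen_le

lemma palLen_flatMap_le {σ : ℕ → List ℕ} (hσ : ∀ a, σ a ≠ [] ∧ (σ a).Palindrome) (w : List ℕ) :
    palLen (w.flatMap σ) ≤ palLen w := by
  obtain ⟨ps, ⟨hflat, hpal⟩, hlen⟩ := exists_isPalDecomp_length_eq_palLen w
  have : IsPalDecomp (w.flatMap σ) (ps.map (List.flatMap σ)) := by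
    refine ⟨by subst hflat; clear hpal hlen; induction ps <;> simp [*], ?_⟩
    simp only [List.mem_map, forall_exists_index, and_imp, forall_apply_eq_imp_iff₂]
    intro p hp
    refine ⟨?_, (hpal p hp).2.flatMap fun a => (hσ a).2⟩
    simp [List.flatMap_eq_nil_iff, List.exists_mem_of_ne_nil _ (hpal p hp).1, hσ]
  simpa [hlen] using this.palLen_le

lemma exists_append_palLen_succ_le {w : List ℕ} (hw : w ≠ []) :
    ∃ u p, w = u ++ p ∧ p ≠ [] ∧ p.Palindrome ∧ palLen u + 1 ≤ palLen w := by
  obtain ⟨ps, ⟨hflat, hpal⟩, hlen⟩ := exists_isPalDecomp_length_eq_palLen w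
  rcases ps.eq_nil_or_concat with rfl | ⟨qs, p, rfl⟩
  · exact absurd hflat.symm (by simpa using hw)
  · rw [List.concat_eq_append] at hflat hpal hlen
    have hps : IsPalDecomp qs.flatten qs := ⟨rfl, fun q hq => hpal q (by simp [hq])⟩
    obtain ⟨hne, hp⟩ := hpal p (by simp)
    refine ⟨qs.flatten, p, by simp [← hflat], hne, hp, ?_⟩
    simpa [← hlen] using hps.palLen_le

def tmFactor (c n : ℕ) : List ℕ := (List.range' c (n - c)).map tm

lemma map_tm_range_eq_append {c n : ℕ} (h : c ≤ n) :
    (List.range n).map tm = (List.range c).map tm ++ tmFactor c n := by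
  rw [tmFactor, ← List.map_append, List.range_eq_range', List.range_eq_range']
  congr 1
  simpa [Nat.add_sub_cancel' h] using (List.range'_append_1 (s := 0) (m := c) (n := n - c)).symm

lemma tmFactor_palindrome_iff {c n : ℕ} : (tmFactor c n).Palindrome ↔ IsTMPal c n := by
  rw [List.Palindrome.iff_reverse_eq, List.ext_getElem_iff]
  simp only [tmFactor, List.length_reverse, List.length_map, List.length_range', true_and,
    List.getElem_reverse, List.getElem_map, List.getElem_range', Nat.one_mul]
  constructor
  · intro h i hci hin
    have := h (i - c) (by omega) (by omega)
    rw [show c + (n - c - 1 - (i - c)) = c + n - 1 - i by omega,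
      show c + (i - c) = i by omega] at this
    exact this.symm
  · intro h d hd _
    rw [h (c + d) (by omega) (by omega)]
    congr 1
    omega

lemma map_tm_range_four_mul (n : ℕ) :
    (List.range (4 * n)).map tm =
      ((List.range n).map tm).flatMap fun a => [a, 1 - a, 1 - a, a] := by
  induction n with
  | zero => rfl
  | succ n ih =>
    rw [show 4 * (n + 1) = 4 * n + 3 + 1 by ring]
    simp only [List.range_succ, List.map_append, List.flatMap_append, ih]
    simp [tm_four_mul, tm_four_mul_add_one, tm_four_mul_add_two, tm_four_mul_add_three]

lemma pplTM_zero : pplTM 0 = 0 := palLen_nil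

lemma pplTM_le_of_isTMPal {c n : ℕ} (hcn : c < n) (hP : IsTMPal c n) :
    pplTM n ≤ pplTM c + 1 := by
  rw [pplTM, map_tm_range_eq_append hcn.le]
  refine palLen_append_le (tmFactor_palindrome_iff.mpr hP) ?_
  simp only [tmFactor, ne_eq, List.map_eq_nil_iff, List.range'_eq_nil_iff]
  omega

lemma pplTM_add_le (n k : ℕ) : pplTM (n + k) ≤ pplTM n + k := by
  induction k with
  | zero => rfl
  | succ k ih =>
    rw [← Nat.add_assoc]
    have : pplTM (n + k + 1) ≤ pplTM (n + k) + 1 :=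
      pplTM_le_of_isTMPal (Nat.lt_succ_self _) fun i _ _ => by
        rw [show n + k + (n + k + 1) - 1 - i = i by omega]
    omega

lemma pplTM_four_mul_le (n : ℕ) : pplTM (4 * n) ≤ pplTM n := by
  rw [pplTM, pplTM, map_tm_range_four_mul]
  exact palLen_flatMap_le (fun a => ⟨by simp, .of_reverse_eq (by simp)⟩) _

lemma exists_isTMPal_suffix {n : ℕ} (hn : 0 < n) :
    ∃ c < n, pplTM c + 1 ≤ pplTM n ∧ IsTMPal c n := by
  obtain ⟨u, p, hw, hne, hp, hlen⟩ :=
    exists_append_palLen_succ_le (w := (List.range n).map tm) (by simpa using hn.ne')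
  have hc : u.length < n := by
    have := congrArg List.length hw
    simp only [List.length_map, List.length_range, List.length_append] at this
    have := List.length_pos_iff.mpr hne
    omega
  obtain ⟨hu, hpf⟩ :=
    List.append_inj (hw.symm.trans (map_tm_range_eq_append hc.le)) (by simp)
  exact ⟨u.length, hc, by rwa [pplTM, ← hu], tmFactor_palindrome_iff.mp (hpf ▸ hp)⟩

lemma isTMPal_four_mul_add_one (m : ℕ) : IsTMPal (4 * m + 1) (4 * m + 3) := by
  intro i hi hi'
  obtain rfl | rfl : i = 4 * m + 1 ∨ i = 4 * m + 2 := by omega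
  · rw [show 4 * m + 1 + (4 * m + 3) - 1 - (4 * m + 1) = 4 * m + 2 by omega,
      tm_four_mul_add_one, tm_four_mul_add_two]
  · rw [show 4 * m + 1 + (4 * m + 3) - 1 - (4 * m + 2) = 4 * m + 1 by omega,
      tm_four_mul_add_one, tm_four_mul_add_two]

lemma pplTM_four_mul_add_le_of_isTMPal {c m : ℕ} (hcm : c ≤ m) (hP : IsTMPal c (m + 1)) :
    pplTM (4 * m + 2) ≤ pplTM c + 3 ∧ pplTM (4 * m + 3) ≤ pplTM c + 2 := by
  have h4P := hP.four_mul
  have hc₁ := pplTM_add_le (4 * c) 1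
  have hc₂ := pplTM_add_le (4 * c) 2
  have hc := pplTM_four_mul_le c
  constructor
  · rcases hcm.lt_or_eq with hcm | rfl
    · have := pplTM_le_of_isTMPal (by omega) (h4P.shrink 2)
      rw [show 4 * (m + 1) - 2 = 4 * m + 2 by omega] at this
      omega
    · omega
  · have := pplTM_le_of_isTMPal (by omega) (h4P.shrink 1)
    rw [show 4 * (m + 1) - 1 = 4 * m + 3 by omega] at this
    omega

lemma pplRec_le_pplTM (n : ℕ) : pplRec n ≤ pplTM n := by
  induction n using Nat.strong_induction_on with
  | _ n ih =>
    rcases Nat.eq_zero_or_pos n with rfl | hn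
    · simp [pplRec_zero]
    · obtain ⟨c, hcn, hc, hP⟩ := exists_isTMPal_suffix hn
      have := pplRec_le_of_isTMPal hP hcn
      have := ih c hcn
      omega

lemma pplTM_le_pplRec (n : ℕ) : pplTM n ≤ pplRec n := by
  induction n using Nat.strong_induction_on with
  | _ n ih =>
    obtain ⟨m, r, hr, rfl⟩ : ∃ m r, r < 4 ∧ n = 4 * m + r := ⟨n / 4, n % 4, by omega, by omega⟩
    have ihm : pplTM m ≤ pplRec m := by
      rcases Nat.eq_zero_or_pos m with rfl | hm
      · simp [pplTM_zero]
      · exact ih m (by omega)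
    have h4 := pplTM_four_mul_le m
    obtain ⟨c, hcm, hc, hP⟩ := exists_isTMPal_suffix (n := m + 1) (by omega)
    have hrest := pplTM_four_mul_add_le_of_isTMPal (Nat.le_of_lt_succ hcm) hP
    interval_cases r
    · simp only [Nat.add_zero, pplRec_four_mul]
      omega
    · have := pplTM_add_le (4 * m) 1
      rw [pplRec_four_mul_add_one]
      omega
    · have := pplTM_add_le (4 * m) 2
      have := ih (m + 1) (by omega)
      rw [pplRec_four_mul_add_two]
      omega
    · have := pplTM_add_le (4 * m) 1
      have := ih (m + 1) (by omega)
      have := pplTM_le_of_isTMPal (by omega) (isTMPal_four_mul_add_one m)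
      rw [pplRec_four_mul_add_three]
      omega

theorem pplTM_eq_pplRec : pplTM = pplRec :=
  funext fun n => (pplTM_le_pplRec n).antisymm (pplRec_le_pplTM n)

lemma exists_pplTM_eq (k : ℕ) : ∃ n, pplTM n = k := by
  rw [pplTM_eq_pplRec]
  induction k with
  | zero => exact ⟨0, pplRec_zero⟩
  | succ k ih =>
    obtain ⟨n, hn⟩ := ih
    exact ⟨4 * n + 1, by rw [pplRec_four_mul_add_one, hn]⟩

lemma pplTM_spTM (k : ℕ) : pplTM (spTM k) = k := Nat.sInf_mem (exists_pplTM_eq k)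

lemma spTM_le {k n : ℕ} (h : pplTM n = k) : spTM k ≤ n := Nat.sInf_le h

lemma pplTM_lt_of_lt_spTM {k n : ℕ} (hn : n < spTM k) : pplTM n < k := by
  induction n with
  | zero =>
    rw [pplTM_zero, Nat.pos_iff_ne_zero]
    rintro rfl
    exact hn.ne' (Nat.le_zero.mp (spTM_le pplTM_zero))
  | succ n ih =>
    have := ih (by omega)
    have := pplTM_add_le n 1
    have : pplTM (n + 1) ≠ k := fun h => by have := spTM_le h; omega
    omega

lemma spTM_le_of_le_pplTM {k n : ℕ} (h : k ≤ pplTM n) : spTM k ≤ n :=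
  not_lt.mp fun hn => (pplTM_lt_of_lt_spTM hn).not_ge h

lemma spTM_pos {k : ℕ} (hk : 1 ≤ k) : 0 < spTM k :=
  Nat.pos_of_ne_zero fun h => by have := pplTM_spTM k; rw [h, pplTM_zero] at this; omega

lemma pplTM_four_mul_spTM_sub_two {k : ℕ} (hk : 1 ≤ k) :
    pplTM (4 * spTM k - 2) = k + 1 ∧ pplTM (4 * spTM k - 1) = k + 1 := by
  have hs := spTM_pos hk
  have hlt := pplTM_lt_of_lt_spTM (k := k) (n := spTM k - 1) (by omega)
  have hLip := pplTM_add_le (spTM k - 1) 1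
  have hsk := pplTM_spTM k
  rw [Nat.sub_add_cancel hs] at hLip
  rw [show 4 * spTM k - 2 = 4 * (spTM k - 1) + 2 by omega,
    show 4 * spTM k - 1 = 4 * (spTM k - 1) + 3 by omega]
  rw [pplTM_eq_pplRec] at *
  rw [pplRec_four_mul_add_two, pplRec_four_mul_add_three, Nat.sub_add_cancel hs]
  omega

lemma four_mul_spTM_sub_two_le {k n : ℕ} (h₀ : pplTM n = k + 1) (h₁ : pplTM (n + 1) = k + 1) :
    4 * spTM k - 2 ≤ n := by
  obtain ⟨m, r, hr, rfl⟩ : ∃ m r, r < 4 ∧ n = 4 * m + r := ⟨n / 4, n % 4, by omega, by omega⟩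
  have hm := spTM_le_of_le_pplTM (k := k) (n := m)
  have hm₁ := spTM_le_of_le_pplTM (k := k) (n := m + 1)
  rw [pplTM_eq_pplRec] at *
  interval_cases r
  · simp only [Nat.add_zero, pplRec_four_mul, pplRec_four_mul_add_one] at h₀ h₁
    omega
  · rw [pplRec_four_mul_add_one] at h₀
    omega
  · rw [pplRec_four_mul_add_two] at h₀
    rw [show 4 * m + 2 + 1 = 4 * m + 3 from rfl, pplRec_four_mul_add_three] at h₁
    omega
  · rw [show 4 * m + 3 + 1 = 4 * (m + 1) by ring, pplRec_four_mul] at h₁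
    omega

lemma sp2TM_succ {k : ℕ} (hk : 1 ≤ k) : sp2TM (k + 1) = 4 * spTM k - 2 := by
  have hs := spTM_pos hk
  have hmem : pplTM (4 * spTM k - 2) = k + 1 ∧ pplTM (4 * spTM k - 2 + 1) = k + 1 := by
    rw [show 4 * spTM k - 2 + 1 = 4 * spTM k - 1 by omega]
    exact pplTM_four_mul_spTM_sub_two hk
  obtain ⟨h₀, h₁⟩ : pplTM (sp2TM (k + 1)) = k + 1 ∧ pplTM (sp2TM (k + 1) + 1) = k + 1 :=
    Nat.sInf_mem (s := {n | pplTM n = k + 1 ∧ pplTM (n + 1) = k + 1}) ⟨_, hmem⟩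
  exact (Nat.sInf_le hmem).antisymm (four_mul_spTM_sub_two_le h₀ h₁)

lemma sp2TM_succ_lt_spTM {k : ℕ} (hk : 1 ≤ k) : sp2TM (k + 1) < spTM (k + 2) := by
  rw [sp2TM_succ hk]
  by_contra! h
  have hdiv := pplTM_lt_of_lt_spTM (k := k) (n := spTM (k + 2) / 4) (by have := spTM_pos hk; omega)
  have hsk := pplTM_spTM (k + 2)
  rw [pplTM_eq_pplRec] at hdiv hsk
  have := pplRec_le_div_four_add_two (spTM (k + 2))
  omega

/-- For every `k ≥ 2` there exists `n` with `PPL_t(n) = PPL_t(n+1) = k` (so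
`SP2_t(k)` is well defined); moreover `SP2_t(k) = 4·SP_t(k−1) − 2` for all
`k ≥ 2`, and `SP_t(k−1) ≤ SP2_t(k−1) < SP_t(k)` for all `k ≥ 3`. -/
theorem sp2TM_properties :
    (∀ k, 2 ≤ k → ∃ n, pplTM n = k ∧ pplTM (n + 1) = k) ∧
    (∀ k, 2 ≤ k → sp2TM k + 2 = 4 * spTM (k - 1)) ∧
    (∀ k, 3 ≤ k → spTM (k - 1) ≤ sp2TM (k - 1) ∧ sp2TM (k - 1) < spTM k) := by
  refine ⟨fun k hk => ?_, fun k hk => ?_, fun k hk => ?_⟩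
  · obtain ⟨j, rfl⟩ : ∃ j, k = j + 1 := ⟨k - 1, by omega⟩
    have := spTM_pos (k := j) (by omega)
    refine ⟨4 * spTM j - 2, ?_⟩
    rw [show 4 * spTM j - 2 + 1 = 4 * spTM j - 1 by omega]
    exact pplTM_four_mul_spTM_sub_two (by omega)
  · obtain ⟨j, rfl⟩ : ∃ j, k = j + 1 := ⟨k - 1, by omega⟩
    have := spTM_pos (k := j) (by omega)
    rw [sp2TM_succ (by omega), Nat.add_sub_cancel]
    omega
  · obtain ⟨j, rfl⟩ : ∃ j, k = j + 2 := ⟨k - 2, by omega⟩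
    have hlt := sp2TM_succ_lt_spTM (k := j) (by omega)
    rw [show j + 2 - 1 = j + 1 by omega, sp2TM_succ (by omega)] at *
    exact ⟨spTM_le (pplTM_four_mul_spTM_sub_two (by omega)).1, hlt⟩
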